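/- arXiv:1206.6724 — 2 statements merged into one kernel-verified Lean document; each statement's English description precedes it below -/
import Mathlib

section
/- Let λ ≥ ℵ₁ be a cardinal. Suppose the following holds: for every cardinal λ' ≤ λ and every family (A^i_δ) indexed by i < λ' and limit ordinals δ < ω₁, where each A^i_δ is a cofinal subset of δ of order type ω, there is a club C ⊆ ω₁ such that A^i_δ ⊄ C for all i < λ' and all limit δ < ω₁. Then 2^{ℵ₀} > λ. -/
/-!
If `𝔠 ≤ λ`, then, since a ladder at a countable `δ` is a subset of the countable set `δ`, there
are at most `𝔠` ladders at each countable limit `δ`, so one family `(A i δ)_{i < 𝔠}` lists all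
of them. But every club `C` contains a ladder: an increasing `ω`-sequence in `C` has a countable
limit supremum `δ` in which `C` is cofinal, and since `cof δ = ℵ₀`, `C ∩ δ` has a cofinal subset
of order type `ω`.
-/

open Ordinal Cardinal

/-- The order type of a set of ordinals: the ordinal isomorphic to `(A, <)`. -/
noncomputable def orderType (A : Set Ordinal) : Ordinal :=
  Ordinal.type ((· < ·) : A → A → Prop)

/-- `C` is a club in `ω₁`: a set of countable ordinals, unbounded in `ω₁`, and closed
(for every limit `δ < ω₁`, if `C ∩ δ` is unbounded in `δ` then `δ ∈ C`). -/
def IsClub' (C : Set Ordinal) : Prop :=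
  C ⊆ Set.Iio ω₁ ∧
  (∀ α < ω₁, ∃ β ∈ C, α < β) ∧
  ∀ δ < ω₁, Order.IsSuccLimit δ → (∀ α < δ, ∃ β ∈ C, α < β ∧ β < δ) → δ ∈ C

/-- `A` is a cofinal subset of `δ` of order type `ω`. -/
def IsLadderAt (δ : Ordinal) (A : Set Ordinal) : Prop :=
  A ⊆ Set.Iio δ ∧ sSup A = δ ∧ orderType A = Ordinal.omega0

open Order Set

universe u v

lemma countable_Iio_of_lt_omega_one {δ : Ordinal.{u}} (hδ : δ < ω₁) : Countable (Iio δ) := by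
  rw [← Cardinal.mk_le_aleph0_iff, Cardinal.mk_Iio_ordinal, ← Cardinal.lift_aleph0.{u + 1, u},
    Cardinal.lift_le, Cardinal.card_le_iff, Cardinal.succ_aleph0, Cardinal.ord_aleph]
  exact hδ

lemma exists_isLadderAt_subset {δ : Ordinal.{u}} (hδ : δ < ω₁) (hlim : IsSuccLimit δ)
    {S : Set Ordinal.{u}} (hS : ∀ α < δ, ∃ β ∈ S, α ≤ β ∧ β < δ) :
    ∃ A ⊆ S, IsLadderAt δ A := by
  have := countable_Iio_of_lt_omega_one hδ
  have : Nonempty (Iio δ) := ⟨⟨0, hlim.bot_lt⟩⟩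
  have : NoMaxOrder (Iio δ) := ⟨fun a => ⟨⟨succ a.1, hlim.succ_lt a.2⟩, lt_succ a.1⟩⟩
  have hT : IsCofinal {x : Iio δ | x.1 ∈ S} := fun x => by
    obtain ⟨β, hβS, hxβ, hβδ⟩ := hS x x.2
    exact ⟨⟨β, hβδ⟩, hβS, hxβ⟩
  obtain ⟨t, htS, htcof, htype⟩ := Ordinal.exists_ord_cof_eq_of_isCofinal hT
  rw [Order.cof_eq_aleph0, Cardinal.ord_aleph0] at htype
  let f : t → Ordinal.{u} := fun x => x.1.1
  have hf : StrictMono f := fun _ _ h => h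
  have hfδ : ∀ x, f x < δ := fun x => x.1.2
  have hbdd : BddAbove (range f) := ⟨δ, forall_mem_range.2 fun x => (hfδ x).le⟩
  refine ⟨range f, range_subset_iff.2 fun x => htS x.2, range_subset_iff.2 hfδ, ?_, ?_⟩
  · refine le_antisymm (csSup_le' (forall_mem_range.2 fun x => (hfδ x).le))
      (le_of_forall_lt fun α hα => ?_)
    obtain ⟨x, hx, hαx⟩ := htcof ⟨succ α, hlim.succ_lt hα⟩
    exact (lt_succ α).trans_le ((Subtype.coe_le_coe.2 hαx).trans (le_csSup hbdd ⟨⟨x, hx⟩, rfl⟩))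
  · exact (hf.orderIso f).ordinalType_congr.symm.trans htype

lemma mk_isLadderAt_le_continuum {δ : Ordinal.{u}} (hδ : δ < ω₁) :
    #{A : Set Ordinal.{u} | IsLadderAt δ A} ≤ 𝔠 := by
  have := countable_Iio_of_lt_omega_one hδ
  calc #{A : Set Ordinal.{u} | IsLadderAt δ A}
      ≤ #(𝒫 Iio δ) := Cardinal.mk_subtype_mono fun _ hA => hA.1
    _ = 2 ^ #(Iio δ) := Cardinal.mk_powerset _
    _ ≤ 2 ^ ℵ₀ := Cardinal.power_le_power_left two_ne_zero (Cardinal.mk_le_aleph0)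
    _ = 𝔠 := Cardinal.two_power_aleph0

lemma exists_enumeration_of_lift_mk_le {α : Type u} {s : Set α} (hs : s.Nonempty)
    {c : Cardinal.{v}} (h : Cardinal.lift.{v} #s ≤ Cardinal.lift.{u} c) :
    ∃ f : Ordinal.{v} → α, (∀ i, f i ∈ s) ∧ ∀ a ∈ s, ∃ i < c.ord, f i = a := by
  have : Nonempty s := hs.to_subtype
  obtain ⟨j⟩ : Nonempty (s ↪ Iio c.ord) := by
    rw [← Cardinal.lift_mk_le', Cardinal.mk_Iio_ordinal, Cardinal.card_ord, Cardinal.lift_lift]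
    simpa using Cardinal.lift_le.{v + 1}.2 h
  refine ⟨fun i => if hi : i < c.ord then (Function.invFun j ⟨i, hi⟩ : s) else hs.some,
    fun i => ?_, ?_⟩
  · dsimp only
    split_ifs
    exacts [Subtype.mem _, hs.some_mem]
  · intro a ha
    refine ⟨j ⟨a, ha⟩, (j ⟨a, ha⟩).2, ?_⟩
    simp [mem_Iio.1 (j ⟨a, ha⟩).2, Function.leftInverse_invFun j.injective _]

lemma exists_enumeration_isLadderAt : ∃ A : Ordinal.{v} → Ordinal.{u} → Set Ordinal.{u},
    ∀ δ < ω₁, IsSuccLimit δ →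
      (∀ i, IsLadderAt δ (A i δ)) ∧ ∀ B, IsLadderAt δ B → ∃ i < Cardinal.ord 𝔠, A i δ = B := by
  have : ∀ δ < ω₁, IsSuccLimit δ → ∃ F : Ordinal.{v} → Set Ordinal.{u},
      (∀ i, IsLadderAt δ (F i)) ∧ ∀ B, IsLadderAt δ B → ∃ i < Cardinal.ord 𝔠, F i = B := by
    intro δ hδ hlim
    obtain ⟨A, -, hA⟩ := exists_isLadderAt_subset hδ hlim fun α hα => ⟨α, trivial, le_rfl, hα⟩
    refine exists_enumeration_of_lift_mk_le (s := {A | IsLadderAt δ A}) ⟨A, hA⟩ ?_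
    simpa using Cardinal.lift_le.{v}.2 (mk_isLadderAt_le_continuum hδ)
  choose! F hF using this
  exact ⟨fun i δ => F δ i, hF⟩

lemma exists_isSuccLimit_cofinal_of_unbounded {C : Set Ordinal.{u}} (hCω : C ⊆ Iio ω₁)
    (hC : ∀ α < ω₁, ∃ β ∈ C, α < β) :
    ∃ δ < ω₁, IsSuccLimit δ ∧ ∀ α < δ, ∃ β ∈ C, α ≤ β ∧ β < δ := by
  choose! g hgC hg using hC
  have hmem : ∀ n, g^[n + 1] 0 ∈ C := by
    intro n
    induction n with
    | zero => exact hgC 0 (Ordinal.omega_pos 1)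
    | succ n ih => rw [Function.iterate_succ_apply']; exact hgC _ (hCω ih)
  have hlt : ∀ n, g^[n] 0 < ω₁ := fun
    | 0 => Ordinal.omega_pos 1
    | n + 1 => hCω (hmem n)
  have hf : StrictMono fun n => g^[n] 0 := strictMono_nat_of_lt_succ fun n => by
    simpa only [Function.iterate_succ_apply'] using hg _ (hlt n)
  have hbdd : BddAbove (range fun n => g^[n] 0) := Ordinal.bddAbove_of_small
  refine ⟨⨆ n, g^[n] 0, Ordinal.iSup_lt_omega_one hlt, ?_, fun α hα => ?_⟩
  · by_contra h
    obtain ⟨n, hn⟩ := exists_eq_ciSup_of_not_isSuccLimit hbdd h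
    exact (hf n.lt_succ_self).not_ge ((le_ciSup hbdd (n + 1)).trans hn.ge)
  · obtain ⟨n, hn⟩ := Ordinal.lt_iSup_iff.1 hα
    exact ⟨_, hmem n, (hn.trans (hf n.lt_succ_self)).le,
      (hf (n + 1).lt_succ_self).trans_le (le_ciSup hbdd (n + 2))⟩

theorem stmt0_general (lam : Cardinal)
    (H : ∀ lam' ≤ lam, ∀ A : Ordinal → Ordinal → Set Ordinal,
      (∀ i < lam'.ord, ∀ δ < ω₁, Order.IsSuccLimit δ → IsLadderAt δ (A i δ)) →
      ∃ C : Set Ordinal, IsClub' C ∧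
        ∀ i < lam'.ord, ∀ δ < ω₁, Order.IsSuccLimit δ → ¬ A i δ ⊆ C) :
    lam < Cardinal.continuum := by
  by_contra! hle
  obtain ⟨A, hA⟩ := exists_enumeration_isLadderAt
  obtain ⟨C, ⟨hCω, hCunbdd, -⟩, hAC⟩ := H 𝔠 hle A fun i _ δ hδ hlim => (hA δ hδ hlim).1 i
  obtain ⟨δ, hδ, hlim, hCδ⟩ := exists_isSuccLimit_cofinal_of_unbounded hCω hCunbdd
  obtain ⟨B, hBC, hB⟩ := exists_isLadderAt_subset hδ hlim hCδ
  obtain ⟨i, hi, rfl⟩ := (hA δ hδ hlim).2 B hB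
  exact hAC i hi δ hδ hlim hBC

/-- If for every cardinal `λ' ≤ λ` (with `λ ≥ ℵ₁`) and every family `(A i δ)`, indexed by
`i < λ'` and limit `δ < ω₁`, of cofinal subsets of `δ` of order type `ω`, there is a club
`C ⊆ ω₁` with `A i δ ⊄ C` for all such `i, δ`, then `2^{ℵ₀} > λ`. -/
theorem stmt0 (lam : Cardinal) (hlam : Cardinal.aleph 1 ≤ lam)
    (H : ∀ lam' ≤ lam, ∀ A : Ordinal → Ordinal → Set Ordinal,
      (∀ i < lam'.ord, ∀ δ < ω₁, Order.IsSuccLimit δ → IsLadderAt δ (A i δ)) →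
      ∃ C : Set Ordinal, IsClub' C ∧
        ∀ i < lam'.ord, ∀ δ < ω₁, Order.IsSuccLimit δ → ¬ A i δ ⊆ C) :
    lam < Cardinal.continuum :=
  stmt0_general lam H
end

section
/- Let λ ≥ ω₁ be a cardinal and let τ be an infinite countable ordinal. Then (∗)^τ_λ implies 2^{ℵ₀} > λ. -/
open Ordinal Cardinal

/-- `C` is a club in `ω₁`: a set of countable ordinals, unbounded in `ω₁`, and closed
(for every limit `δ < ω₁`, if `C ∩ δ` is unbounded in `δ` then `δ ∈ C`). -/
def IsClubOmegaOne (C : Set Ordinal) : Prop :=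
  C ⊆ Set.Iio ω₁ ∧
  (∀ α < ω₁, ∃ β ∈ C, α < β) ∧
  ∀ δ < ω₁, Order.IsSuccLimit δ → (∀ α < δ, ∃ β ∈ C, α < β ∧ β < δ) → δ ∈ C

/-- The statement `(∗)^τ_λ`: for every cardinal `λ' ≤ λ` and every sequence `(A i)_{i<λ'}`
of subsets of `ω₁` of order type at most `τ`, there is a club `C ⊆ ω₁` such that `C ∩ A i`
is finite for every `i < λ'`. -/
def starStatement (τ : Ordinal) (lam : Cardinal) : Prop :=
  ∀ lam' ≤ lam, ∀ A : Ordinal → Set Ordinal,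
    (∀ i < lam'.ord, A i ⊆ Set.Iio ω₁ ∧ orderType (A i) ≤ τ) →
    ∃ C : Set Ordinal, IsClubOmegaOne C ∧ ∀ i < lam'.ord, (C ∩ A i).Finite

/-! If `λ ≥ 𝔠`, the `ℵ₁ ^ ℵ₀ = 𝔠` ranges of strictly increasing `ω`-sequences in `ω₁` all have
order type `ω ≤ τ`, so they can be listed as one of the sequences `(A i)_{i < 𝔠}` of `(∗)^τ_λ`.
But the club `C` it provides is unbounded, hence contains such a range, which then meets `C`
in an infinite set. -/

open Set

universe u v

lemma orderType_empty : orderType ∅ = 0 :=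
  type_eq_zero_of_empty _

lemma orderType_range_of_strictMono {f : ℕ → Ordinal.{u}} (hf : StrictMono f) :
    orderType (range f) = ω := by
  have h := RelIso.ordinal_lift_type_eq (hf.orderIso f).toRelIsoLT
  rwa [type_nat_lt, lift_omega0, Ordinal.lift_uzero, eq_comm] at h

lemma exists_strictMono_range_subset {α : Type*} [Preorder α] {C : Set α} (hne : C.Nonempty)
    (hC : ∀ a ∈ C, ∃ b ∈ C, a < b) : ∃ f : ℕ → α, StrictMono f ∧ range f ⊆ C := by
  have : Nonempty C := hne.to_subtype
  have : NoMaxOrder C := ⟨fun a => let ⟨b, hb, hab⟩ := hC a a.2; ⟨⟨b, hb⟩, hab⟩⟩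
  obtain ⟨f, hf⟩ := Nat.exists_strictMono C
  exact ⟨fun n => f n, fun _ _ h => hf h, range_subset_iff.2 fun n => (f n).2⟩

lemma IsClubOmegaOne.exists_strictMono_range_subset {C : Set Ordinal} (hC : IsClubOmegaOne C) :
    ∃ f : ℕ → Ordinal, StrictMono f ∧ range f ⊆ C := by
  obtain ⟨hsub, hunb, -⟩ := hC
  obtain ⟨β, hβ, -⟩ := hunb 0 (omega_pos 1)
  exact _root_.exists_strictMono_range_subset ⟨β, hβ⟩ fun a ha => hunb a (hsub ha)

lemma mk_nat_to_Iio_omega_one : #(ℕ → Iio (ω₁ : Ordinal.{u})) = 𝔠 := by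
  rw [mk_arrow, Cardinal.mk_Iio_ordinal, card_omega, mk_nat, lift_aleph0, Cardinal.lift_lift,
    lift_aleph, Ordinal.lift_one]
  exact power_aleph0_of_le_continuum (ofNat_lt_aleph0.trans aleph0_lt_aleph_one).le
    aleph_one_le_continuum

def omegaSequenceRanges : Set (Set Ordinal.{u}) :=
  range '' {f : ℕ → Ordinal | StrictMono f ∧ ∀ n, f n < ω₁}

lemma mk_omegaSequenceRanges_le : #omegaSequenceRanges.{u} ≤ 𝔠 :=
  calc #omegaSequenceRanges.{u}
    _ ≤ #{f : ℕ → Ordinal.{u} | StrictMono f ∧ ∀ n, f n < ω₁} := mk_image_le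
    _ ≤ #{f : ℕ → Ordinal.{u} // ∀ n, f n < ω₁} := mk_subtype_mono fun _ => And.right
    _ = 𝔠 := (mk_congr Equiv.subtypePiEquivPi).trans mk_nat_to_Iio_omega_one

lemma starStatement.exists_club_of_family {τ : Ordinal.{v + 1}} {lam lam' : Cardinal.{u}}
    (h : starStatement τ lam) (hlam' : lam' ≤ lam) (𝒜 : Set (Set Ordinal.{v}))
    (h𝒜 : lift.{u} #𝒜 ≤ lift.{v + 1} lam') (hA : ∀ A ∈ 𝒜, A ⊆ Iio ω₁ ∧ orderType A ≤ τ) :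
    ∃ C, IsClubOmegaOne C ∧ ∀ A ∈ 𝒜, (C ∩ A).Finite := by
  obtain ⟨e⟩ : Nonempty (𝒜 ↪ Iio lam'.ord) := by
    rw [← lift_mk_le', Cardinal.mk_Iio_ordinal, card_ord, Cardinal.lift_lift]
    simpa using lift_le.{u + 1}.2 h𝒜
  set g : 𝒜 → Ordinal := fun A => e A
  have hg : g.Injective := Subtype.val_injective.comp e.injective
  -- indices outside the range of `g` carry `∅`, of order type `0 ≤ τ`
  set B := Function.extend g (fun A => (A : Set Ordinal)) fun _ => ∅
  have hB : ∀ i, B i ∈ 𝒜 ∨ B i = ∅ := by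
    intro i
    by_cases hi : ∃ A, g A = i
    · obtain ⟨A, rfl⟩ := hi
      exact .inl (by simp only [B, hg.extend_apply, Subtype.coe_prop])
    · exact .inr (Function.extend_apply' _ _ _ hi)
  obtain ⟨C, hC, hfin⟩ := h lam' hlam' B fun i _ => by
    rcases hB i with hi | hi
    · exact hA _ hi
    · simp [hi, orderType_empty]
  refine ⟨C, hC, fun A hA => ?_⟩
  simpa only [B, hg.extend_apply] using hfin (g ⟨A, hA⟩) (e ⟨A, hA⟩).2

theorem stmt4_general (lam : Cardinal)
    (τ : Ordinal) (hτ0 : Ordinal.omega0 ≤ τ)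
    (hstar : starStatement τ lam) :
    lam < Cardinal.continuum := by
  by_contra! hlam
  obtain ⟨C, hC, hfin⟩ := hstar.exists_club_of_family hlam omegaSequenceRanges
    (by simpa using mk_omegaSequenceRanges_le) <| by
    rintro _ ⟨f, ⟨hf, hω⟩, rfl⟩
    exact ⟨range_subset_iff.2 hω, (orderType_range_of_strictMono hf).trans_le hτ0⟩
  obtain ⟨f, hf, hfsub⟩ := hC.exists_strictMono_range_subset
  have hfC : range f ∈ omegaSequenceRanges := ⟨f, ⟨hf, fun n => hC.1 (hfsub ⟨n, rfl⟩)⟩, rfl⟩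
  exact infinite_range_of_injective hf.injective <|
    (hfin _ hfC).subset (subset_inter hfsub subset_rfl)

/-- For a cardinal `λ ≥ ω₁` and an infinite countable ordinal `τ`, `(∗)^τ_λ` implies
`2^{ℵ₀} > λ`. -/
theorem stmt4 (lam : Cardinal) (hlam : Cardinal.aleph 1 ≤ lam)
    (τ : Ordinal) (hτ0 : Ordinal.omega0 ≤ τ) (hτ : τ < ω₁)
    (hstar : starStatement τ lam) :
    lam < Cardinal.continuum :=
  stmt4_general lam τ hτ0 hstar
end
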